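/- Let m, n ≥ 0, i, j ∈ {0,…,N−1}, ε ∈ {0,…,N−1}^m and μ ∈ {0,…,N−1}^n. Set k_r = #{a : ε_a = r} and l_r = #{b : μ_b = r} for 0 ≤ r ≤ N−1, with the convention k_{−1} = k_{N−1}, l_{−1} = l_{N−1}. Then the equality Σ_{b=1}^{n} (e_{μ_b+1} − e_{μ_b}) + e_j = Σ_{a=1}^{m} (e_{ε_a+1} − e_{ε_a}) + e_i holds in ℤ^N if and only if k_r − l_r = k_{r−1} − l_{r−1} + δ_{r,i} − δ_{r,j} for all 0 ≤ r ≤ N−1; and in that case m − n = j − i + N·r_0, where r_0 = k_{N−1} − l_{N−1}. -/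

import Mathlib

open scoped BigOperators

/-- `k_r = #{a : ε a = r}`. -/
def cnt {m N : ℕ} (ε : Fin m → Fin N) (r : Fin N) : ℕ :=
  (Finset.univ.filter fun a => ε a = r).card

/-- The standard basis vector `e_r` of `ℤ^N`. -/
def stdB {N : ℕ} (r : Fin N) : Fin N → ℤ := fun s => if s = r then 1 else 0

lemma succ_eq_iff {N : ℕ} (hN : 2 ≤ N) (r s : Fin N) :
    s = (⟨((r:ℕ)+1)%N, Nat.mod_lt _ (Nat.zero_lt_of_lt hN)⟩ : Fin N)
      ↔ r = ⟨((s:ℕ)+(N-1))%N, Nat.mod_lt _ (Nat.zero_lt_of_lt hN)⟩ := by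
  constructor
  · rintro rfl
    apply Fin.ext
    show (r:ℕ) = ((((r:ℕ)+1)%N) + (N-1)) % N
    rw [Nat.mod_add_mod, (by omega : (r:ℕ)+1+(N-1) = (r:ℕ)+N), Nat.add_mod_right,
      Nat.mod_eq_of_lt r.isLt]
  · rintro rfl
    apply Fin.ext
    show (s:ℕ) = ((((s:ℕ)+(N-1))%N) + 1) % N
    rw [Nat.mod_add_mod, (by omega : (s:ℕ)+(N-1)+1 = (s:ℕ)+N), Nat.add_mod_right,
      Nat.mod_eq_of_lt s.isLt]

lemma sum_comp {m N : ℕ} (hN : 2 ≤ N) (ε : Fin m → Fin N) (s : Fin N) :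
    (∑ a : Fin m,
        (stdB (⟨((ε a : ℕ) + 1) % N, Nat.mod_lt _ (Nat.zero_lt_of_lt hN)⟩ : Fin N) - stdB (ε a))) s
      = (cnt ε ⟨((s : ℕ) + (N - 1)) % N, Nat.mod_lt _ (Nat.zero_lt_of_lt hN)⟩ : ℤ) - (cnt ε s : ℤ) := by
  classical
  rw [Finset.sum_apply]
  simp only [Pi.sub_apply, stdB]
  rw [Finset.sum_sub_distrib, Finset.sum_boole, Finset.sum_boole]
  unfold cnt
  congr 2
  · exact congrArg Finset.card (Finset.filter_congr fun a _ => succ_eq_iff hN (ε a) s)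
  · exact congrArg Finset.card (Finset.filter_congr fun a _ => eq_comm)

lemma sum_indicator (a M : ℕ) :
    (∑ t ∈ Finset.range M, (if a ≤ t then (1:ℤ) else 0)) = (M : ℤ) - min a M := by
  induction M with
  | zero => simp
  | succ M ih =>
    rw [Finset.sum_range_succ, ih]
    split_ifs with h
    · push_cast; omega
    · push_cast; omega

/-- the weight condition
`Σ_b (e_{μ_b+1} - e_{μ_b}) + e_j = Σ_a (e_{ε_a+1} - e_{ε_a}) + e_i` (indices mod `N`)
holds iff `k_r - l_r = k_{r-1} - l_{r-1} + δ_{r,i} - δ_{r,j}` for all `r`, and in that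
case `m - n = j - i + N r₀` with `r₀ = k_{N-1} - l_{N-1}`. -/
theorem weight_condition (N : ℕ) (hN : 2 ≤ N) (m n : ℕ) (i j : Fin N)
    (ε : Fin m → Fin N) (μ : Fin n → Fin N) :
    (((∑ b : Fin n,
          (stdB ⟨((μ b : ℕ) + 1) % N, Nat.mod_lt _ (by omega)⟩ - stdB (μ b))) + stdB j
        = (∑ a : Fin m,
            (stdB ⟨((ε a : ℕ) + 1) % N, Nat.mod_lt _ (by omega)⟩ - stdB (ε a))) + stdB i)
      ↔ ∀ r : Fin N,
          (cnt ε r : ℤ) - (cnt μ r : ℤ)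
            = ((cnt ε ⟨((r : ℕ) + (N - 1)) % N, Nat.mod_lt _ (by omega)⟩ : ℤ)
                - (cnt μ ⟨((r : ℕ) + (N - 1)) % N, Nat.mod_lt _ (by omega)⟩ : ℤ))
              + (if r = i then 1 else 0) - (if r = j then 1 else 0))
    ∧ (((∑ b : Fin n,
          (stdB ⟨((μ b : ℕ) + 1) % N, Nat.mod_lt _ (by omega)⟩ - stdB (μ b))) + stdB j
        = (∑ a : Fin m,
            (stdB ⟨((ε a : ℕ) + 1) % N, Nat.mod_lt _ (by omega)⟩ - stdB (ε a))) + stdB i) →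
      (m : ℤ) - (n : ℤ)
        = (j : ℤ) - (i : ℤ)
          + (N : ℤ) * ((cnt ε ⟨N - 1, by omega⟩ : ℤ) - (cnt μ ⟨N - 1, by omega⟩ : ℤ))) := by
  classical
  have key : (((∑ b : Fin n,
          (stdB ⟨((μ b : ℕ) + 1) % N, Nat.mod_lt _ (by omega)⟩ - stdB (μ b))) + stdB j
        = (∑ a : Fin m,
            (stdB ⟨((ε a : ℕ) + 1) % N, Nat.mod_lt _ (by omega)⟩ - stdB (ε a))) + stdB i)
      ↔ ∀ r : Fin N,
          (cnt ε r : ℤ) - (cnt μ r : ℤ)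
            = ((cnt ε ⟨((r : ℕ) + (N - 1)) % N, Nat.mod_lt _ (by omega)⟩ : ℤ)
                - (cnt μ ⟨((r : ℕ) + (N - 1)) % N, Nat.mod_lt _ (by omega)⟩ : ℤ))
              + (if r = i then 1 else 0) - (if r = j then 1 else 0)) := by
    rw [funext_iff]
    constructor
    · intro h r
      have hr := h r
      rw [Pi.add_apply, Pi.add_apply, sum_comp hN ε r, sum_comp hN μ r] at hr
      simp only [stdB] at hr
      linarith [hr]
    · intro h r
      have hr := h r
      rw [Pi.add_apply, Pi.add_apply, sum_comp hN ε r, sum_comp hN μ r]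
      simp only [stdB]
      linarith [hr]
  constructor
  · exact key
  · intro heq
    have h := key.mp heq
    -- d_t = d_{N-1} + [i ≤ t] - [j ≤ t] for t < N
    have main : ∀ t : ℕ, (ht : t < N) →
        (cnt ε ⟨t, ht⟩ : ℤ) - (cnt μ ⟨t, ht⟩ : ℤ)
          = ((cnt ε ⟨N - 1, by omega⟩ : ℤ) - (cnt μ ⟨N - 1, by omega⟩ : ℤ))
            + (if (i:ℕ) ≤ t then 1 else 0) - (if (j:ℕ) ≤ t then 1 else 0) := by
      intro t ht
      induction t with
      | zero =>
        have h0 := h ⟨0, by omega⟩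
        have e1 : ((0 : ℕ) + (N - 1)) % N = N - 1 := by
          rw [Nat.zero_add, Nat.mod_eq_of_lt (by omega)]
        simp only [e1] at h0
        have ei : ((⟨0, by omega⟩ : Fin N) = i) ↔ ((i:ℕ) ≤ 0) := by
          rw [Fin.ext_iff]; simp only [Fin.val_mk]; omega
        have ej : ((⟨0, by omega⟩ : Fin N) = j) ↔ ((j:ℕ) ≤ 0) := by
          rw [Fin.ext_iff]; simp only [Fin.val_mk]; omega
        rw [h0]
        simp only [ei, ej]
      | succ t iht =>
        have ht' : t < N := by omega
        have hrec := h ⟨t + 1, ht⟩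
        have e1 : ((t + 1 : ℕ) + (N - 1)) % N = t := by
          have : (t + 1) + (N - 1) = t + N := by omega
          rw [this, Nat.add_mod_right, Nat.mod_eq_of_lt ht']
        simp only [e1] at hrec
        have iprev := iht ht'
        rw [hrec, iprev]
        have ei : ((⟨t+1, ht⟩ : Fin N) = i) ↔ (t + 1 = (i:ℕ)) := by
          rw [Fin.ext_iff]
        have ej : ((⟨t+1, ht⟩ : Fin N) = j) ↔ (t + 1 = (j:ℕ)) := by
          rw [Fin.ext_iff]
        simp only [ei, ej]
        split_ifs <;> omega
    -- now sum over all r : Fin N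
    have hm : (m : ℤ) = ∑ r : Fin N, (cnt ε r : ℤ) := by
      have h1 := Finset.card_eq_sum_card_fiberwise (f := ε) (s := Finset.univ)
        (t := Finset.univ) (fun a _ => Finset.mem_univ _)
      simp only [Finset.card_univ, Fintype.card_fin] at h1
      have h2 : m = ∑ r : Fin N, cnt ε r := h1
      conv_lhs => rw [h2]
      push_cast
      rfl
    have hn : (n : ℤ) = ∑ r : Fin N, (cnt μ r : ℤ) := by
      have h1 := Finset.card_eq_sum_card_fiberwise (f := μ) (s := Finset.univ)
        (t := Finset.univ) (fun a _ => Finset.mem_univ _)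
      simp only [Finset.card_univ, Fintype.card_fin] at h1
      have h2 : n = ∑ r : Fin N, cnt μ r := h1
      conv_lhs => rw [h2]
      push_cast
      rfl
    rw [hm, hn, ← Finset.sum_sub_distrib]
    have : ∀ r : Fin N, (cnt ε r : ℤ) - (cnt μ r : ℤ)
        = ((cnt ε ⟨N - 1, by omega⟩ : ℤ) - (cnt μ ⟨N - 1, by omega⟩ : ℤ))
          + (if (i:ℕ) ≤ (r:ℕ) then 1 else 0) - (if (j:ℕ) ≤ (r:ℕ) then 1 else 0) := by
      intro r
      have := main r r.isLt
      simpa using this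
    rw [Finset.sum_congr rfl (fun r _ => this r)]
    rw [Finset.sum_sub_distrib, Finset.sum_add_distrib, Finset.sum_const,
      Finset.card_univ, Fintype.card_fin]
    have hi : (∑ r : Fin N, (if (i:ℕ) ≤ (r:ℕ) then (1:ℤ) else 0)) = (N : ℤ) - (i:ℕ) := by
      rw [Fin.sum_univ_eq_sum_range (fun t => if (i:ℕ) ≤ t then (1:ℤ) else 0) N,
        sum_indicator]
      have : min (i:ℕ) N = (i:ℕ) := by omega
      rw [this]
    have hj : (∑ r : Fin N, (if (j:ℕ) ≤ (r:ℕ) then (1:ℤ) else 0)) = (N : ℤ) - (j:ℕ) := by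
      rw [Fin.sum_univ_eq_sum_range (fun t => if (j:ℕ) ≤ t then (1:ℤ) else 0) N,
        sum_indicator]
      have : min (j:ℕ) N = (j:ℕ) := by omega
      rw [this]
    rw [hi, hj]
    ring
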